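/- arXiv:2112.10142 — 2 statements merged into one kernel-verified Lean document; each statement's English description precedes it below -/
import Mathlib

section
/- Let v be a value function and let the weighting functions w⁻, w⁺ be continuously differentiable on [0,1] with strictly positive derivatives. Let ξ be a bounded random variable and a ∈ ℝ. If E_{w⁻w⁺}[v(ξ − a)] ≥ 0, then ρ_{(v,w⁻,w⁺)}(ξ) ≥ a. -/
open MeasureTheory Set

noncomputable section

/-- A value function: strictly increasing `v : ℝ → ℝ` with `v 0 = 0`. -/
def IsValueFun (v : ℝ → ℝ) : Prop := StrictMono v ∧ v 0 = 0

/-- A weighting function: a strictly increasing `w : [0,1] → [0,1]`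
with `w 0 = 0` and `w 1 = 1`. -/
def IsWeightFun (w : ℝ → ℝ) : Prop :=
  StrictMonoOn w (Icc 0 1) ∧ MapsTo w (Icc 0 1) (Icc 0 1) ∧ w 0 = 0 ∧ w 1 = 1

/-- The CPT distorted expectation
`E_{w⁻w⁺}[v(ζ)] = ∫₀^∞ w⁺(ℙ(v(ζ) ≥ t)) dt − ∫₀^∞ w⁻(ℙ(v(ζ) ≤ −t)) dt`. -/
def cptE {Ω : Type*} [MeasurableSpace Ω] (P : Measure Ω)
    (v wm wp : ℝ → ℝ) (ζ : Ω → ℝ) : ℝ :=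
  (∫ t in Ioi (0:ℝ), wp (P {ω | t ≤ v (ζ ω)}).toReal)
    - ∫ t in Ioi (0:ℝ), wm (P {ω | v (ζ ω) ≤ -t}).toReal

/-- Both integrals defining the CPT distorted expectation are finite. -/
def CptWellDef {Ω : Type*} [MeasurableSpace Ω] (P : Measure Ω)
    (v wm wp : ℝ → ℝ) (ζ : Ω → ℝ) : Prop :=
  IntegrableOn (fun t => wp (P {ω | t ≤ v (ζ ω)}).toReal) (Ioi 0) ∧
    IntegrableOn (fun t => wm (P {ω | v (ζ ω) ≤ -t}).toReal) (Ioi 0)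

/-- The generalized shortfall risk measure (GSR-CPT):
`ρ_{(v,w⁻,w⁺)}(ξ) = inf { x : E_{w⁻w⁺}[v(ξ − x)] ≤ 0 }`, with `inf ∅ = +∞`. -/
def gsr {Ω : Type*} [MeasurableSpace Ω] (P : Measure Ω)
    (v wm wp : ℝ → ℝ) (ξ : Ω → ℝ) : EReal :=
  sInf ((fun x : ℝ => (x : EReal)) ''
    {x : ℝ | cptE P v wm wp (fun ω => ξ ω - x) ≤ 0})

/-- A bounded random variable. -/
def IsBddRV {Ω : Type*} [MeasurableSpace Ω] (ξ : Ω → ℝ) : Prop :=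
  Measurable ξ ∧ ∃ M : ℝ, ∀ ω, |ξ ω| ≤ M

/-- A weighting function which is continuously differentiable on `[0,1]`
with strictly positive derivative. -/
def SmoothWeight (w : ℝ → ℝ) : Prop :=
  IsWeightFun w ∧ ContDiffOn ℝ 1 w (Icc 0 1) ∧
    ∀ p ∈ Icc (0:ℝ) 1, 0 < derivWithin w (Icc 0 1) p

/-!
If `x < a` then `v(ξ - x) > v(ξ - a)` pointwise, so the tail `ℙ(v(ξ - x) ≥ t)` dominates
`ℙ(v(ξ - a) ≥ t)` and the reverse holds for the lower tails. A smooth weighting function with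
positive derivative on the compact interval `[0,1]` has slopes bounded below by some `κ > 0`,
so after distortion the CPT expectation still grows by at least `κ (𝔼 v(ξ - x) - 𝔼 v(ξ - a))`,
which is positive by the layer cake formula. Hence `c ↦ E_{w⁻w⁺}[v(ξ - c)]` is strictly
decreasing, and no `x < a` can make it nonpositive.
-/

lemma ContDiffOn.exists_pos_mul_sub_le_sub {w : ℝ → ℝ} {a b : ℝ} (hab : a < b)
    (hw : ContDiffOn ℝ 1 w (Icc a b)) (hpos : ∀ p ∈ Icc a b, 0 < derivWithin w (Icc a b) p) :
    ∃ κ > 0, ∀ q ∈ Icc a b, ∀ p ∈ Icc a b, q ≤ p → κ * (p - q) ≤ w p - w q := by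
  have hcont : ContinuousOn (derivWithin w (Icc a b)) (Icc a b) :=
    hw.continuousOn_derivWithin (uniqueDiffOn_Icc hab) le_rfl
  obtain ⟨p₀, hp₀, hmin⟩ := isCompact_Icc.exists_isMinOn (nonempty_Icc.mpr hab.le) hcont
  refine ⟨derivWithin w (Icc a b) p₀, hpos p₀ hp₀,
    (convex_Icc a b).mul_sub_le_image_sub_of_le_deriv hw.continuousOn
      ((hw.differentiableOn one_ne_zero).mono interior_subset) fun y hy => ?_⟩
  rw [interior_Icc] at hy
  rw [← derivWithin_of_mem_nhds (Icc_mem_nhds hy.1 hy.2)]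
  exact hmin (Ioo_subset_Icc_self hy)

lemma mul_integral_sub_le_integral_comp_sub {α : Type*} [MeasurableSpace α] {μ : Measure α}
    {D : Set ℝ} {f g : α → ℝ} {κ : ℝ} {w : ℝ → ℝ}
    (hgap : ∀ q ∈ D, ∀ p ∈ D, q ≤ p → κ * (p - q) ≤ w p - w q)
    (hf : ∀ x, f x ∈ D) (hg : ∀ x, g x ∈ D) (hgf : ∀ x, g x ≤ f x)
    (hfi : Integrable f μ) (hgi : Integrable g μ)
    (hwf : Integrable (fun x => w (f x)) μ) (hwg : Integrable (fun x => w (g x)) μ) :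
    κ * ((∫ x, f x ∂μ) - ∫ x, g x ∂μ) ≤ (∫ x, w (f x) ∂μ) - ∫ x, w (g x) ∂μ := by
  rw [← integral_sub hfi hgi, ← integral_const_mul, ← integral_sub hwf hwg]
  exact integral_mono ((hfi.sub hgi).const_mul κ) (hwf.sub hwg)
    fun x => hgap _ (hg x) _ (hf x) (hgf x)

lemma integral_lt_integral_of_forall_lt {α : Type*} [MeasurableSpace α] {μ : Measure α}
    [NeZero μ] {f g : α → ℝ} (hf : Integrable f μ) (hg : Integrable g μ)
    (hfg : ∀ x, f x < g x) : ∫ x, f x ∂μ < ∫ x, g x ∂μ := by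
  rw [← sub_pos, ← integral_sub hg hf, integral_pos_iff_support_of_nonneg
    (fun x => (sub_pos.mpr (hfg x)).le) (hg.sub hf)]
  have : Function.support (fun x => g x - f x) = univ :=
    eq_univ_of_forall fun x => (sub_pos.mpr (hfg x)).ne'
  simpa [this] using NeZero.ne μ

lemma integrableOn_Ioi_of_antitone {g : ℝ → ℝ} (hg : Antitone g) {a B : ℝ}
    (hB : ∀ t, B < t → g t = 0) : IntegrableOn g (Ioi a) := by
  have hcover : Ioi a ⊆ Icc a B ∪ Ioi B := fun t ht => by
    rcases le_or_gt t B with htB | htB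
    · exact Or.inl ⟨le_of_lt ht, htB⟩
    · exact Or.inr htB
  refine IntegrableOn.mono_set (IntegrableOn.union ?_ ?_) hcover
  · exact hg.locallyIntegrable.integrableOn_isCompact isCompact_Icc
  · exact (integrableOn_congr_fun (fun t ht => hB t ht) measurableSet_Ioi).mpr
      integrableOn_zero

section Tails

variable {Ω : Type*} [MeasurableSpace Ω]

def upperTail (P : Measure Ω) (Z : Ω → ℝ) (t : ℝ) : ℝ := P.real {ω | t ≤ Z ω}

def lowerTail (P : Measure Ω) (Z : Ω → ℝ) (t : ℝ) : ℝ := P.real {ω | Z ω ≤ -t}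

variable {P : Measure Ω} {Z Z' : Ω → ℝ} {B t : ℝ}

lemma cptE_id_eq (wm wp : ℝ → ℝ) (Z : Ω → ℝ) :
    cptE P id wm wp Z =
      (∫ t in Ioi 0, wp (upperTail P Z t)) - ∫ t in Ioi 0, wm (lowerTail P Z t) := rfl

lemma upperTail_mem_Icc [IsProbabilityMeasure P] : upperTail P Z t ∈ Icc 0 1 :=
  ⟨measureReal_nonneg, measureReal_le_one⟩

lemma lowerTail_mem_Icc [IsProbabilityMeasure P] : lowerTail P Z t ∈ Icc 0 1 :=
  ⟨measureReal_nonneg, measureReal_le_one⟩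

lemma antitone_upperTail [IsFiniteMeasure P] : Antitone (upperTail P Z) :=
  fun _ _ hst => measureReal_mono fun _ hω => hst.trans hω

lemma antitone_lowerTail [IsFiniteMeasure P] : Antitone (lowerTail P Z) :=
  fun _ _ hst => measureReal_mono fun ω (hω : Z ω ≤ _) => show Z ω ≤ _ by linarith

lemma upperTail_le_upperTail [IsFiniteMeasure P] (h : ∀ ω, Z' ω ≤ Z ω) :
    upperTail P Z' t ≤ upperTail P Z t :=
  measureReal_mono fun ω hω => le_trans hω (h ω)

lemma lowerTail_le_lowerTail [IsFiniteMeasure P] (h : ∀ ω, Z' ω ≤ Z ω) :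
    lowerTail P Z t ≤ lowerTail P Z' t :=
  measureReal_mono fun ω hω => le_trans (h ω) hω

lemma upperTail_eq_zero (hB : ∀ ω, Z ω ≤ B) (ht : B < t) : upperTail P Z t = 0 := by
  have : {ω | t ≤ Z ω} = ∅ := eq_empty_of_forall_notMem fun ω hω => by
    linarith [hB ω, show t ≤ Z ω from hω]
  simp [upperTail, this]

lemma lowerTail_eq_zero (hB : ∀ ω, -B ≤ Z ω) (ht : B < t) : lowerTail P Z t = 0 := by
  have : {ω | Z ω ≤ -t} = ∅ := eq_empty_of_forall_notMem fun ω hω => by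
    linarith [hB ω, show Z ω ≤ -t from hω]
  simp [lowerTail, this]

lemma integrableOn_comp_upperTail [IsProbabilityMeasure P] {w : ℝ → ℝ}
    (hw : MonotoneOn w (Icc 0 1)) (hw0 : w 0 = 0) (hB : ∀ ω, Z ω ≤ B) :
    IntegrableOn (fun t => w (upperTail P Z t)) (Ioi 0) :=
  integrableOn_Ioi_of_antitone
    (fun _ _ hst => hw upperTail_mem_Icc upperTail_mem_Icc (antitone_upperTail hst))
    (fun t ht => by rw [upperTail_eq_zero hB ht, hw0])

lemma integrableOn_comp_lowerTail [IsProbabilityMeasure P] {w : ℝ → ℝ}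
    (hw : MonotoneOn w (Icc 0 1)) (hw0 : w 0 = 0) (hB : ∀ ω, -B ≤ Z ω) :
    IntegrableOn (fun t => w (lowerTail P Z t)) (Ioi 0) :=
  integrableOn_Ioi_of_antitone
    (fun _ _ hst => hw lowerTail_mem_Icc lowerTail_mem_Icc (antitone_lowerTail hst))
    (fun t ht => by rw [lowerTail_eq_zero hB ht, hw0])

lemma integral_upperTail_sub_integral_lowerTail (hZ : Integrable Z P) :
    (∫ t in Ioi 0, upperTail P Z t) - ∫ t in Ioi 0, lowerTail P Z t = ∫ ω, Z ω ∂P := by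
  have hpos := hZ.pos_part.integral_eq_integral_meas_le (ae_of_all _ fun ω => le_max_right _ 0)
  have hneg := hZ.neg_part.integral_eq_integral_meas_le (ae_of_all _ fun ω => le_max_right _ 0)
  have hupper : ∫ t in Ioi 0, upperTail P Z t = ∫ ω, max (Z ω) 0 ∂P := by
    rw [hpos]
    refine setIntegral_congr_fun measurableSet_Ioi fun t (ht : 0 < t) => ?_
    simp only [upperTail, le_max_iff, not_le.mpr ht, or_false]
  have hlower : ∫ t in Ioi 0, lowerTail P Z t = ∫ ω, max (-Z ω) 0 ∂P := by
    rw [hneg]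
    refine setIntegral_congr_fun measurableSet_Ioi fun t (ht : 0 < t) => ?_
    simp only [lowerTail, le_max_iff, not_le.mpr ht, or_false, le_neg]
  rw [hupper, hlower, ← integral_sub hZ.pos_part hZ.neg_part]
  simp only [max_zero_sub_max_neg_zero_eq_self]

end Tails

section Monotonicity

variable {Ω : Type*} [MeasurableSpace Ω] {P : Measure Ω} [IsProbabilityMeasure P]
  {wm wp : ℝ → ℝ}

lemma exists_pos_slope_bound_of_smoothWeight (hwm : SmoothWeight wm) (hwp : SmoothWeight wp) :
    ∃ κ > 0, ∀ q ∈ Icc (0 : ℝ) 1, ∀ p ∈ Icc (0 : ℝ) 1, q ≤ p →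
      κ * (p - q) ≤ wm p - wm q ∧ κ * (p - q) ≤ wp p - wp q := by
  obtain ⟨κm, hκm, hgapm⟩ := hwm.2.1.exists_pos_mul_sub_le_sub zero_lt_one hwm.2.2
  obtain ⟨κp, hκp, hgapp⟩ := hwp.2.1.exists_pos_mul_sub_le_sub zero_lt_one hwp.2.2
  refine ⟨min κm κp, lt_min hκm hκp, fun q hq p hp hqp => ⟨?_, ?_⟩⟩
  · exact (mul_le_mul_of_nonneg_right (min_le_left _ _) (sub_nonneg.2 hqp)).trans
      (hgapm q hq p hp hqp)
  · exact (mul_le_mul_of_nonneg_right (min_le_right _ _) (sub_nonneg.2 hqp)).trans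
      (hgapp q hq p hp hqp)

lemma cptE_id_lt_cptE_id (hwm : SmoothWeight wm) (hwp : SmoothWeight wp) {Z Z' : Ω → ℝ}
    (hZ : Measurable Z) (hZ' : Measurable Z') {B : ℝ} (hU : ∀ ω, Z ω ≤ B)
    (hL : ∀ ω, -B ≤ Z' ω) (hlt : ∀ ω, Z' ω < Z ω) :
    cptE P id wm wp Z' < cptE P id wm wp Z := by
  have hle : ∀ ω, Z' ω ≤ Z ω := fun ω => (hlt ω).le
  have hU' : ∀ ω, Z' ω ≤ B := fun ω => (hle ω).trans (hU ω)
  have hL' : ∀ ω, -B ≤ Z ω := fun ω => (hL ω).trans (hle ω)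
  have hZi : Integrable Z P := Integrable.of_bound hZ.aestronglyMeasurable B
    (ae_of_all _ fun ω => abs_le.2 ⟨hL' ω, hU ω⟩)
  have hZ'i : Integrable Z' P := Integrable.of_bound hZ'.aestronglyMeasurable B
    (ae_of_all _ fun ω => abs_le.2 ⟨hL ω, hU' ω⟩)
  obtain ⟨κ, hκ, hgap⟩ := exists_pos_slope_bound_of_smoothWeight hwm hwp
  have hup := mul_integral_sub_le_integral_comp_sub (f := upperTail P Z) (g := upperTail P Z')
    (fun q hq p hp hqp => (hgap q hq p hp hqp).2)
    (fun _ => upperTail_mem_Icc) (fun _ => upperTail_mem_Icc)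
    (fun _ => upperTail_le_upperTail hle)
    (integrableOn_comp_upperTail monotoneOn_id rfl hU)
    (integrableOn_comp_upperTail monotoneOn_id rfl hU')
    (integrableOn_comp_upperTail hwp.1.1.monotoneOn hwp.1.2.2.1 hU)
    (integrableOn_comp_upperTail hwp.1.1.monotoneOn hwp.1.2.2.1 hU')
  have hlow := mul_integral_sub_le_integral_comp_sub (f := lowerTail P Z') (g := lowerTail P Z)
    (fun q hq p hp hqp => (hgap q hq p hp hqp).1)
    (fun _ => lowerTail_mem_Icc) (fun _ => lowerTail_mem_Icc)
    (fun _ => lowerTail_le_lowerTail hle)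
    (integrableOn_comp_lowerTail monotoneOn_id rfl hL)
    (integrableOn_comp_lowerTail monotoneOn_id rfl hL')
    (integrableOn_comp_lowerTail hwm.1.1.monotoneOn hwm.1.2.2.1 hL)
    (integrableOn_comp_lowerTail hwm.1.1.monotoneOn hwm.1.2.2.1 hL')
  have hmean := integral_lt_integral_of_forall_lt hZ'i hZi hlt
  rw [← integral_upperTail_sub_integral_lowerTail hZi,
    ← integral_upperTail_sub_integral_lowerTail hZ'i] at hmean
  rw [cptE_id_eq, cptE_id_eq]
  nlinarith [mul_pos hκ (sub_pos.2 hmean)]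

lemma strictAnti_cptE_sub {v : ℝ → ℝ} (hv : StrictMono v) (hwm : SmoothWeight wm)
    (hwp : SmoothWeight wp) {ξ : Ω → ℝ} (hξ : IsBddRV ξ) :
    StrictAnti fun c => cptE P v wm wp (fun ω => ξ ω - c) := by
  obtain ⟨hξm, M, hM⟩ := hξ
  intro x a hxa
  have hmeas : ∀ c, Measurable fun ω => v (ξ ω - c) :=
    fun c => hv.monotone.measurable.comp (hξm.sub measurable_const)
  -- `cptE P v wm wp ζ` is definitionally `cptE P id wm wp (v ∘ ζ)`.
  exact cptE_id_lt_cptE_id hwm hwp (hmeas x) (hmeas a) (B := max (v (M - x)) (-v (-M - a)))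
    (fun ω => (hv.monotone (by linarith [(abs_le.mp (hM ω)).2])).trans (le_max_left _ _))
    (fun ω => neg_le.mpr ((neg_le_neg (hv.monotone (by linarith [(abs_le.mp (hM ω)).1]))).trans
      (le_max_right _ _)))
    (fun ω => hv (by linarith))

end Monotonicity

/-- if the weighting functions are continuously differentiable on
`[0,1]` with strictly positive derivatives, `ξ` is a bounded random variable
and `E_{w⁻w⁺}[v(ξ − a)] ≥ 0`, then `ρ_{(v,w⁻,w⁺)}(ξ) ≥ a`. -/
theorem gsr_lower_bound {Ω : Type*} [MeasurableSpace Ω] (P : Measure Ω)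
    [IsProbabilityMeasure P]
    (v wm wp : ℝ → ℝ) (hv : IsValueFun v) (hwm : SmoothWeight wm)
    (hwp : SmoothWeight wp)
    (ξ : Ω → ℝ) (hξ : IsBddRV ξ) (a : ℝ)
    (hE : 0 ≤ cptE P v wm wp (fun ω => ξ ω - a)) :
    (a : EReal) ≤ gsr P v wm wp ξ := by
  refine le_sInf ?_
  rintro _ ⟨x, hx, rfl⟩
  refine EReal.coe_le_coe_iff.mpr (le_of_not_gt fun hxa => ?_)
  exact (hE.trans_lt (strictAnti_cptE_sub hv.1 hwm hwp hξ hxa)).not_ge hx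
end
end

section
/- Fix weighting functions w⁻, w⁺ that are continuously differentiable on [0,1] with strictly positive derivatives. Let A₁, …, A_K be bounded random variables and let a_k⁻ ≤ a_k⁺ be real numbers with [a_k⁻, a_k⁺] contained in the open interval (essinf A_k, esssup A_k) for each k. Let v be a value function such that for each k the map x ↦ E_{w⁻w⁺}[v(A_k − x)] is continuous on ℝ. Then the following are equivalent: (i) E_{w⁻w⁺}[v(A_k − a_k⁺)] ≤ 0 and E_{w⁻w⁺}[v(A_k − a_k⁻)] ≥ 0 for all k = 1, …, K; (ii) a_k⁻ ≤ ρ_{(v,w⁻,w⁺)}(A_k) ≤ a_k⁺ for all k = 1, …, K. -/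
open MeasureTheory Set

noncomputable section

open Filter

/-!
Write `f x = E_{w⁻w⁺}[v(A - x)]`, so that `ρ(A)` is the infimum of the sublevel set `{f ≤ 0}`.
Since `v` and the weights are increasing, `f` is antitone; as `f` is continuous, `ρ(A) ≤ a⁺` iff
`f a⁺ ≤ 0`. Moreover `f` is strictly decreasing to the left of any `a < esssup A`: for `x < a`,
`v(A - x)⁺ > v(A - a)⁺` on the non-null event `{A > a}`, so `E[v(A - x)⁺] > E[v(A - a)⁺]`. By the
layer-cake formula these expectations are the integrals of the tails `t ↦ ℙ(v(A - ·) ≥ t)`, and as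
`w⁺` is strictly increasing the gains integral of `f` increases strictly as well. Hence
`a⁻ ≤ ρ(A)` iff `f a⁻ ≥ 0`.
-/

section InfOfSublevel

variable {f : ℝ → ℝ}

lemma sInf_coe_sublevel_le_iff (hf : Continuous f) (hanti : Antitone f) {b : ℝ} :
    sInf ((fun x : ℝ => (x : EReal)) '' {x | f x ≤ 0}) ≤ b ↔ f b ≤ 0 := by
  refine ⟨fun hle => ?_, fun hb => sInf_le ⟨b, hb, rfl⟩⟩
  have h_right : ∀ y ∈ Ioi b, f y ≤ 0 := by
    intro y hy
    obtain ⟨_, ⟨x, hx, rfl⟩, hxy⟩ :=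
      sInf_lt_iff.1 (hle.trans_lt (EReal.coe_lt_coe_iff.2 hy))
    exact (hanti (EReal.coe_lt_coe_iff.1 hxy).le).trans hx
  exact le_of_tendsto (hf.continuousWithinAt (s := Ioi b))
    (eventually_nhdsWithin_of_forall h_right)

lemma coe_le_sInf_coe_sublevel_iff (hf : Continuous f) {a : ℝ}
    (hstrict : ∀ x < a, f a < f x) :
    (a : EReal) ≤ sInf ((fun x : ℝ => (x : EReal)) '' {x | f x ≤ 0}) ↔ 0 ≤ f a := by
  constructor
  · intro hle
    by_contra! hneg
    obtain ⟨x, hxa, hx⟩ := ((hf.tendsto a).eventually (eventually_lt_nhds hneg)).exists_lt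
    have : (a : EReal) ≤ x := hle.trans (sInf_le ⟨x, hx.le, rfl⟩)
    exact (EReal.coe_le_coe_iff.1 this).not_gt hxa
  · intro ha
    refine le_sInf ?_
    rintro _ ⟨x, hx, rfl⟩
    by_contra! hxa
    exact (hstrict x (EReal.coe_lt_coe_iff.1 hxa)).not_ge (hx.trans ha)

end InfOfSublevel

lemma measure_lt_ne_zero_of_lt_essSup {Ω : Type*} [MeasurableSpace Ω] {μ : Measure Ω}
    {X : Ω → ℝ} {a : ℝ} (hX : IsCoboundedUnder (· ≤ ·) (ae μ) X) (ha : a < essSup X μ) :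
    μ {ω | a < X ω} ≠ 0 := by
  intro h0
  have hle : X ≤ᵐ[μ] fun _ => a := by
    rw [EventuallyLE, ae_iff]
    simpa only [not_le] using h0
  exact (essSup_le_of_ae_le a hle hX).not_gt ha

lemma integral_lt_integral_of_ae_le_of_measure_lt_ne_zero {Ω : Type*} [MeasurableSpace Ω]
    {μ : Measure Ω} {f g : Ω → ℝ} (hf : Integrable f μ) (hg : Integrable g μ)
    (hfg : f ≤ᵐ[μ] g) (hlt : μ {ω | f ω < g ω} ≠ 0) :
    ∫ ω, f ω ∂μ < ∫ ω, g ω ∂μ := by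
  refine (integral_mono_ae hf hg hfg).lt_of_ne fun heq => hlt ?_
  have h_ae : ∀ᵐ ω ∂μ, ¬ f ω < g ω := by
    filter_upwards [(integral_eq_iff_of_ae_le hf hg hfg).1 heq] with ω hω
    exact hω.not_lt
  simpa only [not_not] using ae_iff.1 h_ae

lemma integral_max_zero_eq_integral_tail {Ω : Type*} [MeasurableSpace Ω] {μ : Measure Ω}
    {X : Ω → ℝ} (hX : Integrable (fun ω => max (X ω) 0) μ) :
    ∫ ω, max (X ω) 0 ∂μ = ∫ t in Ioi (0 : ℝ), (μ {ω | t ≤ X ω}).toReal := by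
  rw [hX.integral_eq_integral_meas_le
    (Eventually.of_forall fun ω => le_max_right _ _)]
  refine setIntegral_congr_fun measurableSet_Ioi fun t ht => ?_
  simp only [measureReal_def, le_max_iff, not_le.2 (mem_Ioi.1 ht), or_false]

section WeightedTail

variable {Ω : Type*} [MeasurableSpace Ω] {P : Measure Ω} [IsProbabilityMeasure P]
  {w : ℝ → ℝ} {X Y : Ω → ℝ} {C : ℝ}

lemma toReal_measure_mem_Icc (s : Set Ω) : (P s).toReal ∈ Icc (0 : ℝ) 1 :=
  ⟨measureReal_nonneg, measureReal_le_one⟩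

lemma IsWeightFun.apply_measure_mono (hw : IsWeightFun w) {s t : Set Ω} (hst : s ⊆ t) :
    w (P s).toReal ≤ w (P t).toReal :=
  hw.1.monotoneOn (toReal_measure_mem_Icc s) (toReal_measure_mem_Icc t) (measureReal_mono hst)

lemma IsWeightFun.integrableOn_tail (hw : IsWeightFun w) (hX : ∀ ω, X ω ≤ C) :
    IntegrableOn (fun t => w (P {ω | t ≤ X ω}).toReal) (Ioi 0) := by
  have hanti : Antitone fun t => w (P {ω | t ≤ X ω}).toReal :=
    fun s t hst => hw.apply_measure_mono fun ω h => hst.trans h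
  have hzero : EqOn (fun t => w (P {ω | t ≤ X ω}).toReal) 0 (Ioi (max C 0)) := by
    intro t ht
    have hempty : {ω | t ≤ X ω} = ∅ :=
      eq_empty_of_forall_notMem fun ω h => (lt_of_le_of_lt (hX ω) (max_lt_iff.1 ht).1).not_ge h
    simp [hempty, hw.2.2.1]
  rw [← Ioc_union_Ioi_eq_Ioi (le_max_right C 0)]
  refine (IntegrableOn.of_bound measure_Ioc_lt_top
    hanti.measurable.aestronglyMeasurable 1 (Eventually.of_forall fun t => ?_)).union
    ((integrableOn_congr_fun hzero measurableSet_Ioi).2 integrableOn_zero)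
  have hw_mem := hw.2.1 (toReal_measure_mem_Icc (P := P) {ω | t ≤ X ω})
  rw [Real.norm_of_nonneg hw_mem.1]
  exact hw_mem.2

lemma IsWeightFun.setIntegral_tail_mono (hw : IsWeightFun w) (hXY : X ≤ Y)
    (hY : ∀ ω, Y ω ≤ C) :
    ∫ t in Ioi 0, w (P {ω | t ≤ X ω}).toReal ≤ ∫ t in Ioi 0, w (P {ω | t ≤ Y ω}).toReal :=
  setIntegral_mono_on (hw.integrableOn_tail fun ω => (hXY ω).trans (hY ω))
    (hw.integrableOn_tail hY) measurableSet_Ioi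
    fun _ _ => hw.apply_measure_mono fun ω h => h.trans (hXY ω)

lemma integrable_max_zero_of_le (hX : Measurable X) (hXC : ∀ ω, X ω ≤ C) :
    Integrable (fun ω => max (X ω) 0) P :=
  Integrable.of_bound (hX.max measurable_const).aestronglyMeasurable (max C 0)
    (Eventually.of_forall fun ω => by
      rw [Real.norm_of_nonneg (le_max_right _ _)]
      exact max_le_max_right 0 (hXC ω))

lemma IsWeightFun.setIntegral_tail_lt (hw : IsWeightFun w) (hXm : Measurable X)
    (hYm : Measurable Y) (hXY : X ≤ Y) (hY : ∀ ω, Y ω ≤ C)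
    (hlt : P {ω | max (X ω) 0 < max (Y ω) 0} ≠ 0) :
    ∫ t in Ioi 0, w (P {ω | t ≤ X ω}).toReal < ∫ t in Ioi 0, w (P {ω | t ≤ Y ω}).toReal := by
  have hX : ∀ ω, X ω ≤ C := fun ω => (hXY ω).trans (hY ω)
  -- Equal integrals would force equal tails (`w` is injective), hence `E[X⁺] = E[Y⁺]` by the
  -- layer-cake formula.
  refine (hw.setIntegral_tail_mono hXY hY).lt_of_ne fun heq => ?_
  have h_tail : (fun t => (P {ω | t ≤ X ω}).toReal)
      =ᵐ[volume.restrict (Ioi 0)] fun t => (P {ω | t ≤ Y ω}).toReal := by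
    filter_upwards [(integral_eq_iff_of_ae_le (hw.integrableOn_tail hX)
      (hw.integrableOn_tail hY) (Eventually.of_forall fun t =>
        hw.apply_measure_mono fun ω h => h.trans (hXY ω))).1 heq] with t ht
    exact hw.1.injOn (toReal_measure_mem_Icc _) (toReal_measure_mem_Icc _) ht
  have hXi := integrable_max_zero_of_le (P := P) hXm hX
  have hYi := integrable_max_zero_of_le (P := P) hYm hY
  refine (integral_lt_integral_of_ae_le_of_measure_lt_ne_zero hXi hYi
    (Eventually.of_forall fun ω => max_le_max_right 0 (hXY ω)) hlt).ne ?_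
  rw [integral_max_zero_eq_integral_tail hXi, integral_max_zero_eq_integral_tail hYi]
  exact integral_congr_ae h_tail

end WeightedTail

lemma cptE_eq_sub_tail {Ω : Type*} [MeasurableSpace Ω] (P : Measure Ω) (v wm wp : ℝ → ℝ)
    (ζ : Ω → ℝ) :
    cptE P v wm wp ζ = (∫ t in Ioi 0, wp (P {ω | t ≤ v (ζ ω)}).toReal)
      - ∫ t in Ioi 0, wm (P {ω | t ≤ -v (ζ ω)}).toReal := by
  simp only [cptE, le_neg]

section DistortedExpectation

variable {Ω : Type*} [MeasurableSpace Ω] {P : Measure Ω} [IsProbabilityMeasure P]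
  {v wm wp : ℝ → ℝ} {A : Ω → ℝ}

lemma cptE_mono (hwm : IsWeightFun wm) (hwp : IsWeightFun wp) (hv : Monotone v)
    {ζ₁ ζ₂ : Ω → ℝ} {c C : ℝ} (h : ζ₁ ≤ ζ₂) (h₁ : ∀ ω, c ≤ ζ₁ ω) (h₂ : ∀ ω, ζ₂ ω ≤ C) :
    cptE P v wm wp ζ₁ ≤ cptE P v wm wp ζ₂ := by
  rw [cptE_eq_sub_tail, cptE_eq_sub_tail]
  exact sub_le_sub (hwp.setIntegral_tail_mono (fun ω => hv (h ω)) fun ω => hv (h₂ ω))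
    (hwm.setIntegral_tail_mono (fun ω => neg_le_neg (hv (h ω))) fun ω => neg_le_neg (hv (h₁ ω)))

lemma cptE_lt (hwm : IsWeightFun wm) (hwp : IsWeightFun wp) (hv : IsValueFun v)
    {ζ₁ ζ₂ : Ω → ℝ} {c C : ℝ} (hζ₁ : Measurable ζ₁) (hζ₂ : Measurable ζ₂) (h : ζ₁ ≤ ζ₂)
    (h₁ : ∀ ω, c ≤ ζ₁ ω) (h₂ : ∀ ω, ζ₂ ω ≤ C) (hlt : P {ω | ζ₁ ω < ζ₂ ω ∧ 0 < ζ₂ ω} ≠ 0) :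
    cptE P v wm wp ζ₁ < cptE P v wm wp ζ₂ := by
  have hvm : Monotone v := hv.1.monotone
  have h_pos : {ω | ζ₁ ω < ζ₂ ω ∧ 0 < ζ₂ ω} ⊆ {ω | max (v (ζ₁ ω)) 0 < max (v (ζ₂ ω)) 0} := by
    rintro ω ⟨hζ, hpos⟩
    have hv_pos : 0 < v (ζ₂ ω) := hv.2 ▸ hv.1 hpos
    exact lt_max_of_lt_left (max_lt (hv.1 hζ) hv_pos)
  have h_gains := hwp.setIntegral_tail_lt (P := P) (X := fun ω => v (ζ₁ ω))
    (Y := fun ω => v (ζ₂ ω)) (hvm.measurable.comp hζ₁)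
    (hvm.measurable.comp hζ₂) (fun ω => hvm (h ω)) (fun ω => hvm (h₂ ω))
    fun h0 => hlt (measure_mono_null h_pos h0)
  have h_losses := hwm.setIntegral_tail_mono (P := P) (fun ω => neg_le_neg (hvm (h ω)))
    fun ω => neg_le_neg (hvm (h₁ ω))
  rw [cptE_eq_sub_tail, cptE_eq_sub_tail]
  linarith

variable {M : ℝ}

lemma antitone_cptE_sub (hwm : IsWeightFun wm) (hwp : IsWeightFun wp) (hv : Monotone v)
    (hM : ∀ ω, |A ω| ≤ M) : Antitone fun x => cptE P v wm wp (fun ω => A ω - x) :=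
  fun x y hxy => cptE_mono hwm hwp hv (fun ω => sub_le_sub_left hxy (A ω))
    (c := -M - y) (fun ω => by linarith [(abs_le.1 (hM ω)).1])
    (C := M - x) (fun ω => by linarith [(abs_le.1 (hM ω)).2])

lemma cptE_sub_lt_of_lt (hwm : IsWeightFun wm) (hwp : IsWeightFun wp) (hv : IsValueFun v)
    (hA : Measurable A) (hM : ∀ ω, |A ω| ≤ M) {x y : ℝ} (hxy : x < y)
    (hy : P {ω | y < A ω} ≠ 0) :
    cptE P v wm wp (fun ω => A ω - y) < cptE P v wm wp (fun ω => A ω - x) := by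
  refine cptE_lt hwm hwp hv (hA.sub_const y) (hA.sub_const x)
    (fun ω => sub_le_sub_left hxy.le (A ω))
    (c := -M - y) (fun ω => by linarith [(abs_le.1 (hM ω)).1])
    (C := M - x) (fun ω => by linarith [(abs_le.1 (hM ω)).2])
    fun h0 => hy (measure_mono_null (fun ω (hω : y < A ω) => ?_) h0)
  exact ⟨sub_lt_sub_left hxy (A ω), by linarith⟩

end DistortedExpectation

/-- characterization of the value functions consistent with
certainty-equivalent information: the inequalities
`E_{w⁻w⁺}[v(A_k − a_k⁺)] ≤ 0` and `E_{w⁻w⁺}[v(A_k − a_k⁻)] ≥ 0` hold for all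
`k` iff `a_k⁻ ≤ ρ_{(v,w⁻,w⁺)}(A_k) ≤ a_k⁺` for all `k`. -/
theorem ce_characterization {Ω : Type*} [MeasurableSpace Ω] (P : Measure Ω)
    [IsProbabilityMeasure P]
    (wm wp : ℝ → ℝ) (hwm : SmoothWeight wm) (hwp : SmoothWeight wp)
    (K : ℕ) (A : Fin K → Ω → ℝ) (hA : ∀ k, IsBddRV (A k))
    (am ap : Fin K → ℝ) (h_le : ∀ k, am k ≤ ap k)
    (h_in : ∀ k, essInf (A k) P < am k ∧ ap k < essSup (A k) P)
    (v : ℝ → ℝ) (hv : IsValueFun v)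
    (hcont : ∀ k, Continuous fun x : ℝ =>
      cptE P v wm wp (fun ω => A k ω - x)) :
    (∀ k, cptE P v wm wp (fun ω => A k ω - ap k) ≤ 0 ∧
        0 ≤ cptE P v wm wp (fun ω => A k ω - am k))
      ↔ ∀ k, (am k : EReal) ≤ gsr P v wm wp (A k) ∧
          gsr P v wm wp (A k) ≤ (ap k : EReal) := by
  refine forall_congr' fun k => ?_
  obtain ⟨hA_meas, M, hM⟩ := hA k
  have hanti := antitone_cptE_sub (P := P) hwm.1 hwp.1 hv.1.monotone hM
  have h_cobdd : IsCoboundedUnder (· ≤ ·) (ae P) (A k) :=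
    isCoboundedUnder_le_of_le _ fun ω => (abs_le.1 (hM ω)).1
  have h_mass : P {ω | am k < A k ω} ≠ 0 :=
    measure_lt_ne_zero_of_lt_essSup h_cobdd ((h_le k).trans_lt (h_in k).2)
  have hstrict : ∀ x < am k, cptE P v wm wp (fun ω => A k ω - am k)
      < cptE P v wm wp (fun ω => A k ω - x) :=
    fun x hx => cptE_sub_lt_of_lt hwm.1 hwp.1 hv hA_meas hM hx h_mass
  rw [gsr, coe_le_sInf_coe_sublevel_iff (hcont k) hstrict,
    sInf_coe_sublevel_le_iff (hcont k) hanti, and_comm]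
end
end
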